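/- (Chisholm–Everitt Theorem) Let (a,b) be an open interval (bounded or unbounded), let w be Lebesgue measurable and positive a.e. on (a,b), and let φ, ψ : (a,b) → ℂ satisfy: (i) φ, ψ ∈ L²_loc((a,b); w); (ii) there exists c ∈ (a,b) with φ ∈ L²((a,c]; w) and ψ ∈ L²([c,b); w); (iii) for all [α,β] ⊂ (a,b), ∫_α^β |φ|² w dx > 0 and ∫_α^β |ψ|² w dx > 0. Define (Af)(x) = φ(x)∫_x^b ψ(t)f(t)w(t)dt and (Bf)(x) = ψ(x)∫_a^x φ(t)f(t)w(t)dt for f ∈ L²((a,b); w), and set K(x) := (∫_a^x |φ|² w dt)^{1/2}(∫_x^b |ψ|² w dt)^{1/2} and K := sup{K(x) : x ∈ (a,b)}. Then A and B are both bounded operators from L²((a,b); w) into L²((a,b); w) if and only if 0 < K < ∞; moreover, in that case ‖Af‖ ≤ 2K‖f‖ and ‖Bg‖ ≤ 2K‖g‖ for all f, g ∈ L²((a,b); w). -/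

import Mathlib

/-!
Write `Φ(x) = ∫_{t ≤ x} |φ|² w` and `Ψ(x) = ∫_{t ≥ x} |ψ|² w` (over `(a,b)`), so that
`K(x) = Φ(x)^{1/2} Ψ(x)^{1/2}`. Everything rests on Hardy's inequality
`∫_{t ≤ x} Φ^{-1/2} dΦ ≤ 2 Φ(x)^{1/2}`, which holds for the distribution function of an arbitrary
measure (atoms included) by the layer-cake formula, since `{t ≤ x : Φ(t) < l⁻²}` has `dΦ`-measure
at most `min(l⁻², Φ(x))`.

Cauchy–Schwarz with the weights `Φ^{∓1/4}` and Hardy give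
`|∫_{t ≤ x} φ f w|² ≤ 2 Φ(x)^{1/2} ∫_{t ≤ x} |f|² Φ^{1/2} w`. Integrating against `|ψ|² w`,
exchanging the order of integration, and bounding `Φ^{1/2} ≤ K Ψ^{-1/2}` inside the dual Hardy
inequality for `Ψ` gives `‖Bf‖² ≤ 4K² ‖f‖²`; the operator `A` is `B` for the data reflected by
`x ↦ -x`. Conversely `B` maps `1_{(a,x]} conj φ`, of norm `Φ(x)^{1/2}`, to a function equal to
`Φ(x) ψ` on `[x,b)`, so `‖B‖ ≥ K(x)` for every `x`. Finally `K > 0` because neither `φ` nor `ψ`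
vanishes on a subinterval.
-/

open MeasureTheory Set Filter ENNReal

noncomputable section

/-- the open interval `(a,b)` of the real line, bounded or unbounded
(`a`, `b` are extended reals). -/
def ceSet (a b : EReal) : Set ℝ := {x : ℝ | a < (x : EReal) ∧ (x : EReal) < b}

/-- the weighted measure `w(x) dx`. -/
def wMeasure (w : ℝ → ℝ) : Measure ℝ :=
  volume.withDensity (fun x => ENNReal.ofReal (w x))

/-- membership in `L²((a,b); w)`. -/
def MemL2w (s : Set ℝ) (w : ℝ → ℝ) (f : ℝ → ℂ) : Prop :=
  MemLp f 2 ((wMeasure w).restrict s)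

/-- the `L²((a,b); w)`-norm. -/
def l2wNorm (s : Set ℝ) (w : ℝ → ℝ) (f : ℝ → ℂ) : ℝ≥0∞ :=
  eLpNorm f 2 ((wMeasure w).restrict s)

/-- the operator `(Af)(x) = φ(x) ∫_x^b ψ(t) f(t) w(t) dt`. -/
def ceA (s : Set ℝ) (w : ℝ → ℝ) (φ ψ f : ℝ → ℂ) (x : ℝ) : ℂ :=
  φ x * ∫ t in s ∩ Ici x, ψ t * f t ∂(wMeasure w)

/-- the operator `(Bf)(x) = ψ(x) ∫_a^x φ(t) f(t) w(t) dt`. -/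
def ceB (s : Set ℝ) (w : ℝ → ℝ) (φ ψ f : ℝ → ℂ) (x : ℝ) : ℂ :=
  ψ x * ∫ t in s ∩ Iic x, φ t * f t ∂(wMeasure w)

/-- `K(x) = (∫_a^x |φ|² w dt)^{1/2} (∫_x^b |ψ|² w dt)^{1/2}`, valued in `[0,∞]`. -/
def ceK (s : Set ℝ) (w : ℝ → ℝ) (φ ψ : ℝ → ℂ) (x : ℝ) : ℝ≥0∞ :=
  (∫⁻ t in s ∩ Iic x, (‖φ t‖₊ : ℝ≥0∞) ^ 2 ∂(wMeasure w)) ^ (1/2 : ℝ) *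
    (∫⁻ t in s ∩ Ici x, (‖ψ t‖₊ : ℝ≥0∞) ^ 2 ∂(wMeasure w)) ^ (1/2 : ℝ)

/-- `K = sup {K(x) : x ∈ (a,b)}`. -/
def ceKsup (s : Set ℝ) (w : ℝ → ℝ) (φ ψ : ℝ → ℂ) : ℝ≥0∞ :=
  ⨆ x ∈ s, ceK s w φ ψ x

/-- `T` is a bounded operator from `L²((a,b); w)` into itself. -/
def BoundedL2w (s : Set ℝ) (w : ℝ → ℝ) (T : (ℝ → ℂ) → (ℝ → ℂ)) : Prop :=
  ∃ M : ℝ≥0∞, M < ⊤ ∧ ∀ f : ℝ → ℂ, MemL2w s w f →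
    MemL2w s w (T f) ∧ l2wNorm s w (T f) ≤ M * l2wNorm s w f

namespace ChisholmEveritt

lemma rpow_neg_mul_rpow_self {X : ℝ≥0∞} (h0 : X ≠ 0) (htop : X ≠ ⊤) (r : ℝ) :
    X ^ (-r) * X ^ r = 1 := by
  rw [← ENNReal.rpow_add _ _ h0 htop, neg_add_cancel, ENNReal.rpow_zero]

lemma rpow_half_sq (X : ℝ≥0∞) : (X ^ (1/2:ℝ)) ^ 2 = X := by
  rw [← ENNReal.rpow_natCast, ← ENNReal.rpow_mul]; norm_num

lemma lt_rpow_neg_half_iff {r X : ℝ≥0∞} : r < X ^ (-(1/2):ℝ) ↔ X < r ^ (-2:ℝ) := by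
  rw [ENNReal.rpow_neg, ENNReal.lt_inv_iff_lt_inv, one_div, ENNReal.rpow_inv_lt_iff (by norm_num),
    ENNReal.rpow_neg, ENNReal.inv_rpow]

lemma rpow_half_le_mul_rpow_neg_half {X Y K : ℝ≥0∞} (h : X ^ (1/2:ℝ) * Y ^ (1/2:ℝ) ≤ K)
    (hY0 : Y ≠ 0) (hYtop : Y ≠ ⊤) : X ^ (1/2:ℝ) ≤ K * Y ^ (-(1/2):ℝ) :=
  calc X ^ (1/2:ℝ) = X ^ (1/2:ℝ) * Y ^ (1/2:ℝ) * Y ^ (-(1/2):ℝ) := by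
        rw [mul_assoc, mul_comm (Y ^ _), rpow_neg_mul_rpow_self hY0 hYtop, mul_one]
    _ ≤ K * Y ^ (-(1/2):ℝ) := mul_le_mul_left h _

lemma ne_top_of_rpow_half_mul_le {X Y K : ℝ≥0∞} (h : X ^ (1/2:ℝ) * Y ^ (1/2:ℝ) ≤ K)
    (hK : K ≠ ⊤) (hY0 : Y ≠ 0) : X ≠ ⊤ := by
  rintro rfl
  simp [ENNReal.top_rpow_of_pos, ENNReal.top_mul, hY0, hK] at h

lemma volume_Ioi_inter_setOf_ofReal_lt (c : ℝ≥0∞) :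
    volume (Ioi 0 ∩ {l : ℝ | ENNReal.ofReal l < c}) = c := by
  rcases eq_or_ne c ⊤ with rfl | hc
  · simp
  · have : Ioi 0 ∩ {l : ℝ | ENNReal.ofReal l < c} = Ioo 0 c.toReal := by
      ext l
      simp only [mem_inter_iff, mem_Ioi, mem_Ioo]
      exact and_congr_right fun hl => ENNReal.ofReal_lt_iff_lt_toReal hl.le hc
    rw [this, Real.volume_Ioo, sub_zero, ENNReal.ofReal_toReal hc]

lemma lintegral_eq_lintegral_meas_ofReal_lt {α : Type*} [MeasurableSpace α] (ν : Measure α)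
    [SFinite ν] {g : α → ℝ≥0∞} (hg : Measurable g) :
    ∫⁻ t, g t ∂ν = ∫⁻ (l : ℝ) in Ioi 0, ν {t | ENNReal.ofReal l < g t} := by
  set E : Set (α × ℝ) := {p | ENNReal.ofReal p.2 < g p.1}
  have hE : MeasurableSet E :=
    measurableSet_lt (ENNReal.measurable_ofReal.comp measurable_snd) (hg.comp measurable_fst)
  calc ∫⁻ t, g t ∂ν = ∫⁻ t, (∫⁻ (l : ℝ) in Ioi 0, E.indicator 1 (t, l)) ∂ν := by
        refine lintegral_congr fun t => ?_
        change g t = ∫⁻ (l : ℝ) in Ioi 0, (Prod.mk t ⁻¹' E).indicator 1 l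
        rw [lintegral_indicator_one (measurable_prodMk_left hE),
          Measure.restrict_apply (measurable_prodMk_left hE), inter_comm]
        exact (volume_Ioi_inter_setOf_ofReal_lt (g t)).symm
    _ = ∫⁻ (l : ℝ) in Ioi 0, ∫⁻ t, E.indicator 1 (t, l) ∂ν :=
        lintegral_lintegral_swap (f := fun t l => E.indicator 1 (t, l))
          (measurable_one.indicator hE).aemeasurable
    _ = ∫⁻ (l : ℝ) in Ioi 0, ν {t | ENNReal.ofReal l < g t} :=
        lintegral_congr fun l => lintegral_indicator_one (measurable_prodMk_right hE)

lemma measure_le_of_forall_measure_Iic_le (ν : Measure ℝ) {S : Set ℝ} {c : ℝ≥0∞}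
    (hS : BddAbove S) (h : ∀ t ∈ S, ν (Iic t) ≤ c) : ν S ≤ c := by
  rcases S.eq_empty_or_nonempty with rfl | hne
  · simp
  by_cases hmax : sSup S ∈ S
  · exact (measure_mono fun t ht => le_csSup hS ht).trans (h _ hmax)
  obtain ⟨u, hu, hu_lim, hu_mem⟩ := exists_seq_tendsto_sSup hne hS
  have hcover : S ⊆ ⋃ n, Iic (u n) := fun t ht => by
    have hlt : t < sSup S := (le_csSup hS ht).lt_of_ne fun h => hmax (h ▸ ht)
    obtain ⟨n, hn⟩ := (hu_lim.eventually (lt_mem_nhds hlt)).exists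
    exact mem_iUnion.2 ⟨n, hn.le⟩
  calc ν S ≤ ν (⋃ n, Iic (u n)) := measure_mono hcover
    _ = ⨆ n, ν (Iic (u n)) := (monotone_Iic.comp hu).measure_iUnion
    _ ≤ c := iSup_le fun n => h _ (hu_mem n)

lemma lintegral_Ioi_min_rpow_neg_two_le (F : ℝ≥0∞) :
    ∫⁻ l in Ioi (0:ℝ), min (ENNReal.ofReal l ^ (-2:ℝ)) F ≤ 2 * F ^ (1/2:ℝ) := by
  rcases eq_or_ne F 0 with rfl | hF0
  · simp
  rcases eq_or_ne F ⊤ with rfl | hFtop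
  · simp
  have hF' : F ^ (-(1/2):ℝ) ≠ ⊤ := by simp [ENNReal.rpow_eq_top_iff, hF0]
  -- split `(0, ∞)` where the two terms of the minimum cross
  set r : ℝ := (F ^ (-(1/2):ℝ)).toReal
  have hr : ENNReal.ofReal r = F ^ (-(1/2):ℝ) := ENNReal.ofReal_toReal hF'
  have hr0 : 0 < r := ENNReal.toReal_pos (by simp [ENNReal.rpow_eq_zero_iff, hF0, hFtop]) hF'
  have near : ∫⁻ l in Ioc 0 r, min (ENNReal.ofReal l ^ (-2:ℝ)) F ≤ F ^ (1/2:ℝ) :=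
    calc ∫⁻ l in Ioc 0 r, min (ENNReal.ofReal l ^ (-2:ℝ)) F ≤ ∫⁻ _ in Ioc 0 r, F :=
          lintegral_mono fun _ => min_le_right _ _
      _ = F ^ (1:ℝ) * F ^ (-(1/2):ℝ) := by
          rw [setLIntegral_const, Real.volume_Ioc, sub_zero, hr, ENNReal.rpow_one]
      _ = F ^ (1/2:ℝ) := by rw [← ENNReal.rpow_add _ _ hF0 hFtop]; norm_num
  have far : ∫⁻ l in Ioi r, min (ENNReal.ofReal l ^ (-2:ℝ)) F ≤ F ^ (1/2:ℝ) :=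
    calc ∫⁻ l in Ioi r, min (ENNReal.ofReal l ^ (-2:ℝ)) F
        ≤ ∫⁻ l in Ioi r, ENNReal.ofReal (l ^ (-2:ℝ)) := by
          refine setLIntegral_mono' measurableSet_Ioi fun l hl => ?_
          rw [← ENNReal.ofReal_rpow_of_pos (hr0.trans hl)]
          exact min_le_left _ _
      _ = ENNReal.ofReal (∫ l in Ioi r, l ^ (-2:ℝ)) :=
          (ofReal_integral_eq_lintegral_ofReal (integrableOn_Ioi_rpow_of_lt (by norm_num) hr0)
            (ae_restrict_of_forall_mem measurableSet_Ioi fun l hl =>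
              Real.rpow_nonneg (hr0.trans hl).le _)).symm
      _ = F ^ (1/2:ℝ) := by
          rw [integral_Ioi_rpow_of_lt (by norm_num) hr0]
          norm_num
          rw [Real.rpow_neg_one, ENNReal.ofReal_inv_of_pos hr0, hr, ← ENNReal.rpow_neg, neg_neg]
  rw [← Ioc_union_Ioi_eq_Ioi hr0.le, lintegral_union measurableSet_Ioi Ioc_disjoint_Ioi_same]
  calc _ ≤ F ^ (1/2:ℝ) + F ^ (1/2:ℝ) := add_le_add near far
    _ = 2 * F ^ (1/2:ℝ) := (two_mul _).symm

theorem lintegral_Iic_measure_Iic_rpow_neg_half_le (ν : Measure ℝ) [SFinite ν] (x : ℝ) :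
    ∫⁻ t in Iic x, ν (Iic t) ^ (-(1/2):ℝ) ∂ν ≤ 2 * ν (Iic x) ^ (1/2:ℝ) := by
  have hmono : Monotone fun t => ν (Iic t) := fun _ _ hst => measure_mono (Iic_subset_Iic.2 hst)
  rw [lintegral_eq_lintegral_meas_ofReal_lt _ (hmono.measurable.pow_const _)]
  refine le_trans (setLIntegral_mono' measurableSet_Ioi fun l _ => ?_)
    (lintegral_Ioi_min_rpow_neg_two_le (ν (Iic x)))
  simp_rw [Measure.restrict_apply' measurableSet_Iic, lt_rpow_neg_half_iff]
  exact le_min (measure_le_of_forall_measure_Iic_le ν ⟨x, fun t ht => ht.2⟩ fun t ht => ht.1.le)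
    (measure_mono inter_subset_right)

lemma lintegral_measure_neg (ν : Measure ℝ) (g : ℝ → ℝ≥0∞) :
    ∫⁻ t, g t ∂ν.neg = ∫⁻ t, g (-t) ∂ν :=
  measurableEmbedding_neg.lintegral_map g

lemma setLIntegral_Iic_measure_neg (ν : Measure ℝ) (g : ℝ → ℝ≥0∞) (x : ℝ) :
    ∫⁻ t in Iic x, g t ∂ν.neg = ∫⁻ t in Ici (-x), g (-t) ∂ν := by
  rw [Measure.neg_def, measurableEmbedding_neg.restrict_map, measurableEmbedding_neg.lintegral_map,
    show Neg.neg ⁻¹' Iic x = Ici (-x) from neg_Iic x]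

lemma setLIntegral_Ici_measure_neg (ν : Measure ℝ) (g : ℝ → ℝ≥0∞) (x : ℝ) :
    ∫⁻ t in Ici x, g t ∂ν.neg = ∫⁻ t in Iic (-x), g (-t) ∂ν := by
  rw [Measure.neg_def, measurableEmbedding_neg.restrict_map, measurableEmbedding_neg.lintegral_map,
    show Neg.neg ⁻¹' Ici x = Iic (-x) from neg_Ici x]

lemma setIntegral_Iic_measure_neg (ν : Measure ℝ) (g : ℝ → ℂ) (x : ℝ) :
    ∫ t in Iic x, g t ∂ν.neg = ∫ t in Ici (-x), g (-t) ∂ν := by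
  rw [Measure.neg_def, measurableEmbedding_neg.restrict_map, measurableEmbedding_neg.integral_map,
    show Neg.neg ⁻¹' Iic x = Ici (-x) from neg_Iic x]

lemma ae_measure_neg_iff {ν : Measure ℝ} {p : ℝ → Prop} :
    (∀ᵐ x ∂ν.neg, p x) ↔ ∀ᵐ x ∂ν, p (-x) :=
  measurableEmbedding_neg.ae_map_iff

lemma aemeasurable_measure_neg_iff {β : Type*} [MeasurableSpace β] {ν : Measure ℝ} {g : ℝ → β} :
    AEMeasurable g ν.neg ↔ AEMeasurable (fun x => g (-x)) ν :=
  measurableEmbedding_neg.aemeasurable_map_iff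

theorem lintegral_Ici_measure_Ici_rpow_neg_half_le (ν : Measure ℝ) [SFinite ν] (x : ℝ) :
    ∫⁻ t in Ici x, ν (Ici t) ^ (-(1/2):ℝ) ∂ν ≤ 2 * ν (Ici x) ^ (1/2:ℝ) := by
  have h := lintegral_Iic_measure_Iic_rpow_neg_half_le ν.neg (-x)
  simp only [setLIntegral_Iic_measure_neg, Measure.neg_apply, neg_Iic, neg_neg] at h
  exact h

lemma sq_lintegral_mul_le_weighted {α : Type*} [MeasurableSpace α] {μ : Measure α}
    {F G W : α → ℝ≥0∞} (hF : AEMeasurable F μ) (hG : AEMeasurable G μ) (hW : AEMeasurable W μ)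
    (hW0 : ∀ᵐ a ∂μ, W a ≠ 0) (hWtop : ∀ᵐ a ∂μ, W a ≠ ⊤) :
    (∫⁻ a, F a * G a ∂μ) ^ 2 ≤ (∫⁻ a, F a ^ 2 * (W a)⁻¹ ∂μ) * ∫⁻ a, G a ^ 2 * W a ∂μ := by
  have hsplit : ∀ᵐ a ∂μ, F a * G a = (F a * (W a)⁻¹ ^ (1/2:ℝ)) * (G a * W a ^ (1/2:ℝ)) := by
    filter_upwards [hW0, hWtop] with a h0 htop
    rw [mul_mul_mul_comm, ← ENNReal.mul_rpow_of_nonneg _ _ (by norm_num),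
      ENNReal.inv_mul_cancel h0 htop, ENNReal.one_rpow, mul_one]
  have hsq : ∀ X Y : ℝ≥0∞, (X * Y ^ (1/2:ℝ)) ^ (2:ℝ) = X ^ 2 * Y := fun X Y => by
    rw [ENNReal.rpow_two, mul_pow, rpow_half_sq]
  have hHolder := ENNReal.lintegral_mul_le_Lp_mul_Lq μ Real.HolderConjugate.two_two
    (hF.mul (hW.inv.pow_const (1/2:ℝ))) (hG.mul (hW.pow_const (1/2:ℝ)))
  simp only [Pi.mul_apply, hsq] at hHolder
  rw [lintegral_congr_ae hsplit]
  calc _ ≤ ((∫⁻ a, F a ^ 2 * (W a)⁻¹ ∂μ) ^ (1/2:ℝ) * (∫⁻ a, G a ^ 2 * W a ∂μ) ^ (1/2:ℝ)) ^ 2 :=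
        pow_le_pow_left' hHolder 2
    _ = _ := by rw [mul_pow, rpow_half_sq, rpow_half_sq]

lemma lintegral_mul_setLIntegral_Iic_comm {ν : Measure ℝ} [SFinite ν] {h g : ℝ → ℝ≥0∞}
    (hh : AEMeasurable h ν) (hg : AEMeasurable g ν) :
    ∫⁻ x, h x * ∫⁻ t in Iic x, g t ∂ν ∂ν = ∫⁻ t, g t * ∫⁻ x in Ici t, h x ∂ν ∂ν := by
  set D : Set (ℝ × ℝ) := {p | p.2 ≤ p.1}
  have hD : MeasurableSet D := measurableSet_le measurable_snd measurable_fst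
  calc ∫⁻ x, h x * ∫⁻ t in Iic x, g t ∂ν ∂ν
      = ∫⁻ x, ∫⁻ t, D.indicator (fun p => h p.1 * g p.2) (x, t) ∂ν ∂ν := by
        refine lintegral_congr fun x => ?_
        rw [← lintegral_const_mul'' _ hg.restrict, ← lintegral_indicator measurableSet_Iic]
        rfl
    _ = ∫⁻ t, ∫⁻ x, D.indicator (fun p => h p.1 * g p.2) (x, t) ∂ν ∂ν :=
        lintegral_lintegral_swap ((hh.comp_fst.mul hg.comp_snd).indicator hD)
    _ = ∫⁻ t, g t * ∫⁻ x in Ici t, h x ∂ν ∂ν := by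
        refine lintegral_congr fun t => ?_
        rw [mul_comm, ← lintegral_mul_const'' _ hh.restrict, ← lintegral_indicator measurableSet_Ici]
        rfl

lemma aestronglyMeasurable_setIntegral_preimage_prodMk {α β : Type*} [MeasurableSpace α]
    [MeasurableSpace β] {μ : Measure α} {ν : Measure β} [SFinite ν] {D : Set (α × β)}
    (hD : MeasurableSet D) {g : β → ℂ} (hg : AEStronglyMeasurable g ν) :
    AEStronglyMeasurable (fun x => ∫ t in Prod.mk x ⁻¹' D, g t ∂ν) μ :=
  ((hg.comp_snd (μ := μ)).indicator hD).integral_prod_right'.congr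
    (ae_of_all _ fun _ => integral_indicator (measurable_prodMk_left hD))

lemma eLpNorm_two_eq {α : Type*} [MeasurableSpace α] (μ : Measure α) (g : α → ℂ) :
    eLpNorm g 2 μ = (∫⁻ x, ‖g x‖ₑ ^ 2 ∂μ) ^ (1/2:ℝ) := by
  simpa using eLpNorm_nnreal_eq_lintegral (μ := μ) (f := g) (p := 2) two_ne_zero

lemma lintegral_enorm_sq_ne_top {α : Type*} [MeasurableSpace α] {μ : Measure α} {g : α → ℂ}
    (hg : MemLp g 2 μ) : ∫⁻ x, ‖g x‖ₑ ^ 2 ∂μ ≠ ⊤ := by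
  have h := hg.2
  rw [eLpNorm_two_eq, ENNReal.rpow_lt_top_iff_of_pos (by norm_num)] at h
  exact h.ne

lemma eLpNorm_le_two_mul_of_lintegral_sq_le {α : Type*} [MeasurableSpace α] {μ : Measure α}
    {g f : α → ℂ} {K : ℝ≥0∞} (h : ∫⁻ x, ‖g x‖ₑ ^ 2 ∂μ ≤ 4 * K ^ 2 * ∫⁻ x, ‖f x‖ₑ ^ 2 ∂μ) :
    eLpNorm g 2 μ ≤ 2 * K * eLpNorm f 2 μ := by
  have h4 : (4 : ℝ≥0∞) ^ (1/2:ℝ) = 2 := by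
    rw [show (4 : ℝ≥0∞) = 2 ^ (2:ℝ) by norm_num, ← ENNReal.rpow_mul]; norm_num
  have hK : (K ^ 2) ^ (1/2:ℝ) = K := by
    rw [← ENNReal.rpow_two, ← ENNReal.rpow_mul]; norm_num
  rw [eLpNorm_two_eq, eLpNorm_two_eq]
  calc (∫⁻ x, ‖g x‖ₑ ^ 2 ∂μ) ^ (1/2:ℝ) ≤ (4 * K ^ 2 * ∫⁻ x, ‖f x‖ₑ ^ 2 ∂μ) ^ (1/2:ℝ) :=
        ENNReal.rpow_le_rpow h (by norm_num)
    _ = 2 * K * (∫⁻ x, ‖f x‖ₑ ^ 2 ∂μ) ^ (1/2:ℝ) := by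
        rw [ENNReal.mul_rpow_of_nonneg _ _ (by norm_num),
          ENNReal.mul_rpow_of_nonneg _ _ (by norm_num), h4, hK]

def sqIntegralIic (ν : Measure ℝ) (φ : ℝ → ℂ) (x : ℝ) : ℝ≥0∞ := ∫⁻ t in Iic x, ‖φ t‖ₑ ^ 2 ∂ν

def sqIntegralIci (ν : Measure ℝ) (ψ : ℝ → ℂ) (x : ℝ) : ℝ≥0∞ := ∫⁻ t in Ici x, ‖ψ t‖ₑ ^ 2 ∂ν

section Hardy

variable {ν : Measure ℝ} {φ ψ f : ℝ → ℂ} {K : ℝ≥0∞}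

lemma monotone_sqIntegralIic : Monotone (sqIntegralIic ν φ) := fun _ _ h =>
  lintegral_mono_set (Iic_subset_Iic.2 h)

lemma antitone_sqIntegralIci : Antitone (sqIntegralIci ν ψ) := fun _ _ h =>
  lintegral_mono_set (Ici_subset_Ici.2 h)

lemma sqIntegralIic_measure_neg (x : ℝ) :
    sqIntegralIic ν.neg (fun t => ψ (-t)) x = sqIntegralIci ν ψ (-x) := by
  simp only [sqIntegralIic, sqIntegralIci, setLIntegral_Iic_measure_neg, neg_neg]

lemma sqIntegralIci_measure_neg (x : ℝ) :
    sqIntegralIci ν.neg (fun t => φ (-t)) x = sqIntegralIic ν φ (-x) := by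
  simp only [sqIntegralIic, sqIntegralIci, setLIntegral_Ici_measure_neg, neg_neg]

lemma lintegral_Iic_mul_sqIntegralIic_rpow_le [SFinite ν] (hφ : AEMeasurable φ ν) (x : ℝ) :
    ∫⁻ t in Iic x, ‖φ t‖ₑ ^ 2 * sqIntegralIic ν φ t ^ (-(1/2):ℝ) ∂ν
      ≤ 2 * sqIntegralIic ν φ x ^ (1/2:ℝ) := by
  calc ∫⁻ t in Iic x, ‖φ t‖ₑ ^ 2 * sqIntegralIic ν φ t ^ (-(1/2):ℝ) ∂ν
      = ∫⁻ t in Iic x, sqIntegralIic ν φ t ^ (-(1/2):ℝ) ∂(ν.withDensity fun t => ‖φ t‖ₑ ^ 2) := by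
        rw [restrict_withDensity measurableSet_Iic, lintegral_withDensity_eq_lintegral_mul₀
          (hφ.enorm.pow_const 2).restrict (monotone_sqIntegralIic.measurable.pow_const _).aemeasurable]
        rfl
    _ ≤ 2 * sqIntegralIic ν φ x ^ (1/2:ℝ) := by
        have h := lintegral_Iic_measure_Iic_rpow_neg_half_le (ν.withDensity fun t => ‖φ t‖ₑ ^ 2) x
        simp only [withDensity_apply _ measurableSet_Iic] at h
        exact h

lemma lintegral_Ici_mul_sqIntegralIci_rpow_le [SFinite ν] (hψ : AEMeasurable ψ ν) (x : ℝ) :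
    ∫⁻ t in Ici x, ‖ψ t‖ₑ ^ 2 * sqIntegralIci ν ψ t ^ (-(1/2):ℝ) ∂ν
      ≤ 2 * sqIntegralIci ν ψ x ^ (1/2:ℝ) := by
  calc ∫⁻ t in Ici x, ‖ψ t‖ₑ ^ 2 * sqIntegralIci ν ψ t ^ (-(1/2):ℝ) ∂ν
      = ∫⁻ t in Ici x, sqIntegralIci ν ψ t ^ (-(1/2):ℝ) ∂(ν.withDensity fun t => ‖ψ t‖ₑ ^ 2) := by
        rw [restrict_withDensity measurableSet_Ici, lintegral_withDensity_eq_lintegral_mul₀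
          (hψ.enorm.pow_const 2).restrict (antitone_sqIntegralIci.measurable.pow_const _).aemeasurable]
        rfl
    _ ≤ 2 * sqIntegralIci ν ψ x ^ (1/2:ℝ) := by
        have h := lintegral_Ici_measure_Ici_rpow_neg_half_le (ν.withDensity fun t => ‖ψ t‖ₑ ^ 2) x
        simp only [withDensity_apply _ measurableSet_Ici] at h
        exact h

variable [SFinite ν]

lemma enorm_setIntegral_Iic_mul_sq_le (hφ : AEMeasurable φ ν) (hf : AEMeasurable f ν)
    (hΦ0 : ∀ᵐ t ∂ν, sqIntegralIic ν φ t ≠ 0) (hΦtop : ∀ᵐ t ∂ν, sqIntegralIic ν φ t ≠ ⊤) (x : ℝ) :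
    ‖∫ t in Iic x, φ t * f t ∂ν‖ₑ ^ 2 ≤
      2 * sqIntegralIic ν φ x ^ (1/2:ℝ) *
        ∫⁻ t in Iic x, ‖f t‖ₑ ^ 2 * sqIntegralIic ν φ t ^ (1/2:ℝ) ∂ν := by
  have hW := (monotone_sqIntegralIic (ν := ν) (φ := φ)).measurable.pow_const (1/2:ℝ)
  calc ‖∫ t in Iic x, φ t * f t ∂ν‖ₑ ^ 2 ≤ (∫⁻ t in Iic x, ‖φ t‖ₑ * ‖f t‖ₑ ∂ν) ^ 2 := by
        simpa only [enorm_mul] using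
          pow_le_pow_left' (enorm_integral_le_lintegral_enorm (fun t => φ t * f t)) 2
    _ ≤ (∫⁻ t in Iic x, ‖φ t‖ₑ ^ 2 * (sqIntegralIic ν φ t ^ (1/2:ℝ))⁻¹ ∂ν) *
          ∫⁻ t in Iic x, ‖f t‖ₑ ^ 2 * sqIntegralIic ν φ t ^ (1/2:ℝ) ∂ν := by
        refine sq_lintegral_mul_le_weighted hφ.enorm.restrict hf.enorm.restrict hW.aemeasurable
          (ae_restrict_of_ae ?_) (ae_restrict_of_ae ?_)
        · filter_upwards [hΦ0, hΦtop] with t h0 htop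
          exact (ENNReal.rpow_pos (pos_iff_ne_zero.2 h0) htop).ne'
        · filter_upwards [hΦtop] with t htop
          exact ENNReal.rpow_ne_top_of_nonneg (by norm_num) htop
    _ ≤ _ := by
        simp only [← ENNReal.rpow_neg]
        exact mul_le_mul_left (lintegral_Iic_mul_sqIntegralIic_rpow_le hφ x) _

lemma rpow_half_mul_setLIntegral_Ici_le (hψ : AEMeasurable ψ ν)
    (hΨ0 : ∀ᵐ x ∂ν, sqIntegralIci ν ψ x ≠ 0) (hΨtop : ∀ᵐ x ∂ν, sqIntegralIci ν ψ x ≠ ⊤)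
    (hK : ∀ᵐ x ∂ν, sqIntegralIic ν φ x ^ (1/2:ℝ) * sqIntegralIci ν ψ x ^ (1/2:ℝ) ≤ K)
    {t : ℝ} (ht0 : sqIntegralIic ν φ t ≠ 0) (httop : sqIntegralIic ν φ t ≠ ⊤)
    (htK : sqIntegralIic ν φ t ^ (1/2:ℝ) * sqIntegralIci ν ψ t ^ (1/2:ℝ) ≤ K) :
    sqIntegralIic ν φ t ^ (1/2:ℝ) *
      ∫⁻ x in Ici t, ‖ψ x‖ₑ ^ 2 * sqIntegralIic ν φ x ^ (1/2:ℝ) ∂ν ≤ 2 * K ^ 2 := by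
  set Φ := sqIntegralIic ν φ
  have hint : ∫⁻ x in Ici t, ‖ψ x‖ₑ ^ 2 * Φ x ^ (1/2:ℝ) ∂ν ≤ K * (2 * (K * Φ t ^ (-(1/2):ℝ))) :=
    calc ∫⁻ x in Ici t, ‖ψ x‖ₑ ^ 2 * Φ x ^ (1/2:ℝ) ∂ν
        ≤ ∫⁻ x in Ici t, K * (‖ψ x‖ₑ ^ 2 * sqIntegralIci ν ψ x ^ (-(1/2):ℝ)) ∂ν := by
          refine lintegral_mono_ae (ae_restrict_of_ae ?_)
          filter_upwards [hΨ0, hΨtop, hK] with x h0 htop hx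
          rw [mul_left_comm]
          exact mul_le_mul_right (rpow_half_le_mul_rpow_neg_half hx h0 htop) _
      _ = K * ∫⁻ x in Ici t, ‖ψ x‖ₑ ^ 2 * sqIntegralIci ν ψ x ^ (-(1/2):ℝ) ∂ν :=
          lintegral_const_mul'' _ ((hψ.enorm.pow_const 2).mul
            ((antitone_sqIntegralIci (ν := ν) (ψ := ψ)).measurable.pow_const
              (-(1/2):ℝ)).aemeasurable).restrict
      _ ≤ K * (2 * (K * Φ t ^ (-(1/2):ℝ))) := by
          refine mul_le_mul_right ((lintegral_Ici_mul_sqIntegralIci_rpow_le hψ t).trans ?_) K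
          exact mul_le_mul_right
            (rpow_half_le_mul_rpow_neg_half ((mul_comm _ _).trans_le htK) ht0 httop) 2
  calc Φ t ^ (1/2:ℝ) * ∫⁻ x in Ici t, ‖ψ x‖ₑ ^ 2 * Φ x ^ (1/2:ℝ) ∂ν
      ≤ Φ t ^ (1/2:ℝ) * (K * (2 * (K * Φ t ^ (-(1/2):ℝ)))) := mul_le_mul_right hint _
    _ = 2 * K ^ 2 * (Φ t ^ (-(1/2):ℝ) * Φ t ^ (1/2:ℝ)) := by ring
    _ = 2 * K ^ 2 := by rw [rpow_neg_mul_rpow_self ht0 httop, mul_one]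

theorem lintegral_enorm_sq_mul_setIntegral_Iic_le (hφ : AEMeasurable φ ν)
    (hψ : AEMeasurable ψ ν) (hf : AEMeasurable f ν)
    (hΦ0 : ∀ᵐ x ∂ν, sqIntegralIic ν φ x ≠ 0) (hΨ0 : ∀ᵐ x ∂ν, sqIntegralIci ν ψ x ≠ 0)
    (hK : ∀ᵐ x ∂ν, sqIntegralIic ν φ x ^ (1/2:ℝ) * sqIntegralIci ν ψ x ^ (1/2:ℝ) ≤ K)
    (hKtop : K ≠ ⊤) :
    ∫⁻ x, ‖ψ x‖ₑ ^ 2 * ‖∫ t in Iic x, φ t * f t ∂ν‖ₑ ^ 2 ∂ν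
      ≤ 4 * K ^ 2 * ∫⁻ x, ‖f x‖ₑ ^ 2 ∂ν := by
  set Φ := sqIntegralIic ν φ
  have hΦtop : ∀ᵐ x ∂ν, Φ x ≠ ⊤ := by
    filter_upwards [hK, hΨ0] with x hx h0
    exact ne_top_of_rpow_half_mul_le hx hKtop h0
  have hΨtop : ∀ᵐ x ∂ν, sqIntegralIci ν ψ x ≠ ⊤ := by
    filter_upwards [hK, hΦ0] with x hx h0
    exact ne_top_of_rpow_half_mul_le ((mul_comm _ _).trans_le hx) hKtop h0
  have hW : Measurable fun x => Φ x ^ (1/2:ℝ) := monotone_sqIntegralIic.measurable.pow_const _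
  calc ∫⁻ x, ‖ψ x‖ₑ ^ 2 * ‖∫ t in Iic x, φ t * f t ∂ν‖ₑ ^ 2 ∂ν
      ≤ ∫⁻ x, ‖ψ x‖ₑ ^ 2 * (2 * Φ x ^ (1/2:ℝ) *
          ∫⁻ t in Iic x, ‖f t‖ₑ ^ 2 * Φ t ^ (1/2:ℝ) ∂ν) ∂ν :=
        lintegral_mono fun x =>
          mul_le_mul_right (enorm_setIntegral_Iic_mul_sq_le hφ hf hΦ0 hΦtop x) _
    _ = 2 * ∫⁻ x, ‖ψ x‖ₑ ^ 2 * Φ x ^ (1/2:ℝ) *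
          ∫⁻ t in Iic x, ‖f t‖ₑ ^ 2 * Φ t ^ (1/2:ℝ) ∂ν ∂ν := by
        rw [← lintegral_const_mul' _ _ (by norm_num)]
        congr 1 with x
        ring
    _ = 2 * ∫⁻ t, ‖f t‖ₑ ^ 2 * Φ t ^ (1/2:ℝ) *
          ∫⁻ x in Ici t, ‖ψ x‖ₑ ^ 2 * Φ x ^ (1/2:ℝ) ∂ν ∂ν := by
        rw [lintegral_mul_setLIntegral_Iic_comm (h := fun x => ‖ψ x‖ₑ ^ 2 * Φ x ^ (1/2:ℝ))
          (g := fun t => ‖f t‖ₑ ^ 2 * Φ t ^ (1/2:ℝ)) ((hψ.enorm.pow_const 2).mul hW.aemeasurable)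
          ((hf.enorm.pow_const 2).mul hW.aemeasurable)]
    _ ≤ 2 * ∫⁻ t, ‖f t‖ₑ ^ 2 * (2 * K ^ 2) ∂ν := by
        refine mul_le_mul_right (lintegral_mono_ae ?_) 2
        filter_upwards [hΦ0, hΦtop, hK] with t h0 htop ht
        rw [mul_assoc]
        exact mul_le_mul_right (rpow_half_mul_setLIntegral_Ici_le hψ hΨ0 hΨtop hK h0 htop ht) _
    _ = 4 * K ^ 2 * ∫⁻ x, ‖f x‖ₑ ^ 2 ∂ν := by
        rw [lintegral_mul_const'' _ (hf.enorm.pow_const 2)]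
        ring

theorem lintegral_enorm_sq_mul_setIntegral_Ici_le (hφ : AEMeasurable φ ν)
    (hψ : AEMeasurable ψ ν) (hf : AEMeasurable f ν)
    (hΦ0 : ∀ᵐ x ∂ν, sqIntegralIic ν φ x ≠ 0) (hΨ0 : ∀ᵐ x ∂ν, sqIntegralIci ν ψ x ≠ 0)
    (hK : ∀ᵐ x ∂ν, sqIntegralIic ν φ x ^ (1/2:ℝ) * sqIntegralIci ν ψ x ^ (1/2:ℝ) ≤ K)
    (hKtop : K ≠ ⊤) :
    ∫⁻ x, ‖φ x‖ₑ ^ 2 * ‖∫ t in Ici x, ψ t * f t ∂ν‖ₑ ^ 2 ∂ν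
      ≤ 4 * K ^ 2 * ∫⁻ x, ‖f x‖ₑ ^ 2 ∂ν := by
  -- reflection `t ↦ -t` exchanges `Iic` and `Ici`, and with them the roles of `φ` and `ψ`
  have h := lintegral_enorm_sq_mul_setIntegral_Iic_le (ν := ν.neg) (φ := fun t => ψ (-t))
    (ψ := fun t => φ (-t)) (f := fun t => f (-t)) (K := K)
    (aemeasurable_measure_neg_iff.2 (by simpa only [neg_neg] using hψ))
    (aemeasurable_measure_neg_iff.2 (by simpa only [neg_neg] using hφ))
    (aemeasurable_measure_neg_iff.2 (by simpa only [neg_neg] using hf))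
    (ae_measure_neg_iff.2 (by simpa only [sqIntegralIic_measure_neg, neg_neg] using hΨ0))
    (ae_measure_neg_iff.2 (by simpa only [sqIntegralIci_measure_neg, neg_neg] using hΦ0))
    (ae_measure_neg_iff.2 (by
      simpa only [sqIntegralIic_measure_neg, sqIntegralIci_measure_neg, neg_neg, mul_comm]
        using hK)) hKtop
  simpa only [lintegral_measure_neg, setIntegral_Iic_measure_neg, neg_neg] using h

theorem memLp_mul_setIntegral_Iic (hφ : AEStronglyMeasurable φ ν)
    (hψ : AEStronglyMeasurable ψ ν) (hf : MemLp f 2 ν)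
    (hΦ0 : ∀ᵐ x ∂ν, sqIntegralIic ν φ x ≠ 0) (hΨ0 : ∀ᵐ x ∂ν, sqIntegralIci ν ψ x ≠ 0)
    (hK : ∀ᵐ x ∂ν, sqIntegralIic ν φ x ^ (1/2:ℝ) * sqIntegralIci ν ψ x ^ (1/2:ℝ) ≤ K)
    (hKtop : K ≠ ⊤) :
    MemLp (fun x => ψ x * ∫ t in Iic x, φ t * f t ∂ν) 2 ν ∧
      eLpNorm (fun x => ψ x * ∫ t in Iic x, φ t * f t ∂ν) 2 ν ≤ 2 * K * eLpNorm f 2 ν := by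
  have hle : eLpNorm (fun x => ψ x * ∫ t in Iic x, φ t * f t ∂ν) 2 ν ≤ 2 * K * eLpNorm f 2 ν :=
    eLpNorm_le_two_mul_of_lintegral_sq_le (by
      simpa only [enorm_mul, mul_pow] using lintegral_enorm_sq_mul_setIntegral_Iic_le
        hφ.aemeasurable hψ.aemeasurable hf.1.aemeasurable hΦ0 hΨ0 hK hKtop)
  refine ⟨⟨hψ.mul ?_, hle.trans_lt (by finiteness [hf.2.ne])⟩, hle⟩
  exact aestronglyMeasurable_setIntegral_preimage_prodMk (D := {p : ℝ × ℝ | p.2 ≤ p.1})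
    (measurableSet_le measurable_snd measurable_fst) (hφ.mul hf.1)

theorem memLp_mul_setIntegral_Ici (hφ : AEStronglyMeasurable φ ν)
    (hψ : AEStronglyMeasurable ψ ν) (hf : MemLp f 2 ν)
    (hΦ0 : ∀ᵐ x ∂ν, sqIntegralIic ν φ x ≠ 0) (hΨ0 : ∀ᵐ x ∂ν, sqIntegralIci ν ψ x ≠ 0)
    (hK : ∀ᵐ x ∂ν, sqIntegralIic ν φ x ^ (1/2:ℝ) * sqIntegralIci ν ψ x ^ (1/2:ℝ) ≤ K)
    (hKtop : K ≠ ⊤) :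
    MemLp (fun x => φ x * ∫ t in Ici x, ψ t * f t ∂ν) 2 ν ∧
      eLpNorm (fun x => φ x * ∫ t in Ici x, ψ t * f t ∂ν) 2 ν ≤ 2 * K * eLpNorm f 2 ν := by
  have hle : eLpNorm (fun x => φ x * ∫ t in Ici x, ψ t * f t ∂ν) 2 ν ≤ 2 * K * eLpNorm f 2 ν :=
    eLpNorm_le_two_mul_of_lintegral_sq_le (by
      simpa only [enorm_mul, mul_pow] using lintegral_enorm_sq_mul_setIntegral_Ici_le
        hφ.aemeasurable hψ.aemeasurable hf.1.aemeasurable hΦ0 hΨ0 hK hKtop)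
  refine ⟨⟨hφ.mul ?_, hle.trans_lt (by finiteness [hf.2.ne])⟩, hle⟩
  exact aestronglyMeasurable_setIntegral_preimage_prodMk (D := {p : ℝ × ℝ | p.1 ≤ p.2})
    (measurableSet_le measurable_fst measurable_snd) (hψ.mul hf.1)

end Hardy

open ComplexConjugate in
theorem rpow_half_mul_rpow_half_le_of_eLpNorm_le {ν : Measure ℝ} {φ ψ : ℝ → ℂ}
    (hφ : AEStronglyMeasurable φ ν) {M : ℝ≥0∞}
    (hM : ∀ f, MemLp f 2 ν →
      eLpNorm (fun y => ψ y * ∫ t in Iic y, φ t * f t ∂ν) 2 ν ≤ M * eLpNorm f 2 ν)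
    {x : ℝ} (h0 : sqIntegralIic ν φ x ≠ 0) (htop : sqIntegralIic ν φ x ≠ ⊤) :
    sqIntegralIic ν φ x ^ (1/2:ℝ) * sqIntegralIci ν ψ x ^ (1/2:ℝ) ≤ M := by
  set Φ := sqIntegralIic ν φ x
  set F : ℝ → ℂ := (Iic x).indicator fun t => conj (φ t)
  have hF_norm : eLpNorm F 2 ν = Φ ^ (1/2:ℝ) := by
    rw [eLpNorm_two_eq, show Φ = ∫⁻ t, (Iic x).indicator (fun t => ‖φ t‖ₑ ^ 2) t ∂ν from
      (lintegral_indicator measurableSet_Iic _).symm]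
    congr 2 with t
    by_cases ht : t ∈ Iic x <;> simp [F, ht]
  have hF : MemLp F 2 ν :=
    ⟨hφ.star.indicator measurableSet_Iic, hF_norm ▸ ENNReal.rpow_lt_top_of_nonneg (by norm_num) htop⟩
  have hBF : ∀ y ∈ Ici x, ‖∫ t in Iic y, φ t * F t ∂ν‖ₑ = Φ := by
    intro y hy
    have hφF : (fun t => φ t * F t) = (Iic x).indicator fun t => ((‖φ t‖ₑ ^ 2).toReal : ℂ) := by
      ext t
      by_cases ht : t ∈ Iic x <;> simp [F, ht, Complex.mul_conj']
    rw [hφF, integral_indicator measurableSet_Iic, Measure.restrict_restrict measurableSet_Iic,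
      Iic_inter_Iic, min_eq_left hy, integral_complex_ofReal,
      integral_toReal (hφ.aemeasurable.enorm.pow_const 2).restrict
        (ae_of_all _ fun t => by finiteness), enorm_eq_nnnorm, Complex.nnnorm_real,
      ← enorm_eq_nnnorm, Real.enorm_eq_ofReal ENNReal.toReal_nonneg]
    exact ENNReal.ofReal_toReal htop
  have hlow : Φ * sqIntegralIci ν ψ x ^ (1/2:ℝ) ≤ M * Φ ^ (1/2:ℝ) :=
    calc Φ * sqIntegralIci ν ψ x ^ (1/2:ℝ)
        = (∫⁻ y in Ici x, ‖ψ y‖ₑ ^ 2 * ‖∫ t in Iic y, φ t * F t ∂ν‖ₑ ^ 2 ∂ν) ^ (1/2:ℝ) := by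
          rw [setLIntegral_congr_fun measurableSet_Ici fun y hy => by rw [hBF y hy],
            lintegral_mul_const' _ _ (by finiteness), ENNReal.mul_rpow_of_nonneg _ _ (by norm_num),
            ← ENNReal.rpow_two, ← ENNReal.rpow_mul, mul_comm]
          norm_num [sqIntegralIci]
      _ ≤ eLpNorm (fun y => ψ y * ∫ t in Iic y, φ t * F t ∂ν) 2 ν := by
          rw [eLpNorm_two_eq]
          simp only [enorm_mul, mul_pow]
          exact ENNReal.rpow_le_rpow (setLIntegral_le_lintegral _ _) (by norm_num)
      _ ≤ M * Φ ^ (1/2:ℝ) := hF_norm ▸ hM F hF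
  have hhalf0 : Φ ^ (1/2:ℝ) ≠ 0 := by simp [ENNReal.rpow_eq_zero_iff, h0]
  have hhalftop : Φ ^ (1/2:ℝ) ≠ ⊤ := by simp [ENNReal.rpow_eq_top_iff, htop]
  rw [← ENNReal.mul_le_mul_iff_right hhalf0 hhalftop, ← mul_assoc, ← sq, rpow_half_sq,
    mul_comm _ M]
  exact hlow

section Interval

variable {μ : Measure ℝ} {s : Set ℝ} {φ : ℝ → ℂ} {x : ℝ}

lemma isOpen_ceSet (a b : EReal) : IsOpen (ceSet a b) :=
  isOpen_Ioo.preimage continuous_coe_real_ereal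

lemma ordConnected_ceSet (a b : EReal) : (ceSet a b).OrdConnected :=
  ordConnected_Ioo.preimage_mono EReal.coe_strictMono.monotone

lemma aestronglyMeasurable_restrict_of_forall_Icc (hs : IsOpen s) (hconn : s.OrdConnected)
    {g : ℝ → ℂ} (h : ∀ α ∈ s, ∀ β ∈ s, AEStronglyMeasurable g (μ.restrict (Icc α β))) :
    AEStronglyMeasurable g (μ.restrict s) := by
  have hcover : s = ⋃ q : {q : ℚ × ℚ // (q.1 : ℝ) ∈ s ∧ (q.2 : ℝ) ∈ s}, Icc (q.1.1 : ℝ) q.1.2 := by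
    refine Subset.antisymm (fun x hx => ?_) (iUnion_subset fun q => hconn.out q.2.1 q.2.2)
    obtain ⟨l, u, ⟨hl, hu⟩, hsub⟩ := mem_nhds_iff_exists_Ioo_subset.1 (hs.mem_nhds hx)
    obtain ⟨q₁, hl₁, h₁x⟩ := exists_rat_btwn hl
    obtain ⟨q₂, hx₂, h₂u⟩ := exists_rat_btwn hu
    exact mem_iUnion.2 ⟨⟨(q₁, q₂), hsub ⟨hl₁, h₁x.trans hu⟩, hsub ⟨hl.trans hx₂, h₂u⟩⟩,
      h₁x.le, hx₂.le⟩
  rw [hcover, aestronglyMeasurable_iUnion_iff]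
  exact fun q => h _ q.2.1 _ q.2.2

lemma sqIntegralIic_restrict (x : ℝ) :
    sqIntegralIic (μ.restrict s) φ x = ∫⁻ t in s ∩ Iic x, ‖φ t‖ₑ ^ 2 ∂μ := by
  rw [sqIntegralIic, Measure.restrict_restrict measurableSet_Iic, inter_comm]

lemma sqIntegralIci_restrict (x : ℝ) :
    sqIntegralIci (μ.restrict s) φ x = ∫⁻ t in s ∩ Ici x, ‖φ t‖ₑ ^ 2 ∂μ := by
  rw [sqIntegralIci, Measure.restrict_restrict measurableSet_Ici, inter_comm]

lemma sqIntegralIic_restrict_ne_zero (hs : IsOpen s) (hconn : s.OrdConnected) (hx : x ∈ s)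
    (hpos : ∀ α ∈ s, α < x → 0 < ∫⁻ t in Icc α x, ‖φ t‖ₑ ^ 2 ∂μ) :
    sqIntegralIic (μ.restrict s) φ x ≠ 0 := by
  obtain ⟨α, hαs, hαx⟩ := Filter.nonempty_of_mem
    (inter_mem (mem_nhdsWithin_of_mem_nhds (hs.mem_nhds hx)) (self_mem_nhdsWithin (s := Iio x)))
  have hsub : Icc α x ⊆ s ∩ Iic x := fun t ht => ⟨hconn.out hαs hx ht, ht.2⟩
  rw [sqIntegralIic_restrict]
  exact ((hpos α hαs hαx).trans_le (lintegral_mono_set hsub)).ne'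

lemma sqIntegralIci_restrict_ne_zero (hs : IsOpen s) (hconn : s.OrdConnected) (hx : x ∈ s)
    (hpos : ∀ β ∈ s, x < β → 0 < ∫⁻ t in Icc x β, ‖φ t‖ₑ ^ 2 ∂μ) :
    sqIntegralIci (μ.restrict s) φ x ≠ 0 := by
  obtain ⟨β, hβs, hxβ⟩ := Filter.nonempty_of_mem
    (inter_mem (mem_nhdsWithin_of_mem_nhds (hs.mem_nhds hx)) (self_mem_nhdsWithin (s := Ioi x)))
  have hsub : Icc x β ⊆ s ∩ Ici x := fun t ht => ⟨hconn.out hx hβs ht, ht.1⟩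
  rw [sqIntegralIci_restrict]
  exact ((hpos β hβs hxβ).trans_le (lintegral_mono_set hsub)).ne'

lemma sqIntegralIic_restrict_ne_top {c : ℝ} (hφc : MemLp φ 2 (μ.restrict (s ∩ Iic c)))
    (hφx : MemLp φ 2 (μ.restrict (Icc c x))) : sqIntegralIic (μ.restrict s) φ x ≠ ⊤ := by
  have hcover : s ∩ Iic x ⊆ (s ∩ Iic c) ∪ Icc c x := by
    rintro t ⟨hts, htx⟩
    rcases le_or_gt t c with htc | hct
    exacts [Or.inl ⟨hts, htc⟩, Or.inr ⟨hct.le, htx⟩]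
  rw [sqIntegralIic_restrict]
  refine ne_top_of_le_ne_top ?_ ((lintegral_mono_set hcover).trans (lintegral_union_le _ _ _))
  exact add_ne_top.2 ⟨lintegral_enorm_sq_ne_top hφc, lintegral_enorm_sq_ne_top hφx⟩

end Interval

instance sFinite_wMeasure (w : ℝ → ℝ) : SFinite (wMeasure w) := by
  unfold wMeasure; infer_instance

lemma ceA_eq (s : Set ℝ) (w : ℝ → ℝ) (φ ψ f : ℝ → ℂ) :
    ceA s w φ ψ f = fun x => φ x * ∫ t in Ici x, ψ t * f t ∂((wMeasure w).restrict s) := by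
  ext x
  rw [ceA, Measure.restrict_restrict measurableSet_Ici, inter_comm]

lemma ceB_eq (s : Set ℝ) (w : ℝ → ℝ) (φ ψ f : ℝ → ℂ) :
    ceB s w φ ψ f = fun x => ψ x * ∫ t in Iic x, φ t * f t ∂((wMeasure w).restrict s) := by
  ext x
  rw [ceB, Measure.restrict_restrict measurableSet_Iic, inter_comm]

lemma ceK_eq (s : Set ℝ) (w : ℝ → ℝ) (φ ψ : ℝ → ℂ) (x : ℝ) :
    ceK s w φ ψ x = sqIntegralIic ((wMeasure w).restrict s) φ x ^ (1/2:ℝ) *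
      sqIntegralIci ((wMeasure w).restrict s) ψ x ^ (1/2:ℝ) := by
  simp only [ceK, sqIntegralIic_restrict, sqIntegralIci_restrict, enorm_eq_nnnorm]

lemma ceK_le_ceKsup {s : Set ℝ} {w : ℝ → ℝ} {φ ψ : ℝ → ℂ} {x : ℝ} (hx : x ∈ s) :
    ceK s w φ ψ x ≤ ceKsup s w φ ψ :=
  le_iSup₂ (f := fun x _ => ceK s w φ ψ x) x hx

lemma memL2w_ceA_and_ceB {s : Set ℝ} {w : ℝ → ℝ} {φ ψ f : ℝ → ℂ} (hs : MeasurableSet s)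
    (hφ : AEStronglyMeasurable φ ((wMeasure w).restrict s))
    (hψ : AEStronglyMeasurable ψ ((wMeasure w).restrict s))
    (hΦ0 : ∀ x ∈ s, sqIntegralIic ((wMeasure w).restrict s) φ x ≠ 0)
    (hΨ0 : ∀ x ∈ s, sqIntegralIci ((wMeasure w).restrict s) ψ x ≠ 0)
    (hK : ceKsup s w φ ψ < ⊤) (hf : MemL2w s w f) :
    (MemL2w s w (ceA s w φ ψ f) ∧
        l2wNorm s w (ceA s w φ ψ f) ≤ 2 * ceKsup s w φ ψ * l2wNorm s w f) ∧
      (MemL2w s w (ceB s w φ ψ f) ∧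
        l2wNorm s w (ceB s w φ ψ f) ≤ 2 * ceKsup s w φ ψ * l2wNorm s w f) := by
  have hae : ∀ {p : ℝ → Prop}, (∀ x ∈ s, p x) → ∀ᵐ x ∂(wMeasure w).restrict s, p x :=
    fun h => (ae_restrict_mem hs).mono h
  have hKx := hae fun x hx => (ceK_eq s w φ ψ x).symm.trans_le (ceK_le_ceKsup (w := w) hx)
  rw [ceA_eq, ceB_eq]
  exact ⟨memLp_mul_setIntegral_Ici hφ hψ hf (hae hΦ0) (hae hΨ0) hKx hK.ne,
    memLp_mul_setIntegral_Iic hφ hψ hf (hae hΦ0) (hae hΨ0) hKx hK.ne⟩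

end ChisholmEveritt

open ChisholmEveritt

theorem chisholm_everitt_general (a b : EReal) (w : ℝ → ℝ) (φ ψ : ℝ → ℂ)
    (hloc : ∀ α ∈ ceSet a b, ∀ β ∈ ceSet a b,
      MemLp φ 2 ((wMeasure w).restrict (Icc α β)) ∧
      MemLp ψ 2 ((wMeasure w).restrict (Icc α β)))
    (hends : ∃ c ∈ ceSet a b,
      MemLp φ 2 ((wMeasure w).restrict (ceSet a b ∩ Iic c)) ∧
      MemLp ψ 2 ((wMeasure w).restrict (ceSet a b ∩ Ici c)))
    (hpos : ∀ α ∈ ceSet a b, ∀ β ∈ ceSet a b, α < β →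
      (0 < ∫⁻ t in Icc α β, (‖φ t‖₊ : ℝ≥0∞) ^ 2 ∂(wMeasure w)) ∧
      (0 < ∫⁻ t in Icc α β, (‖ψ t‖₊ : ℝ≥0∞) ^ 2 ∂(wMeasure w))) :
    ((BoundedL2w (ceSet a b) w (ceA (ceSet a b) w φ ψ) ∧
        BoundedL2w (ceSet a b) w (ceB (ceSet a b) w φ ψ)) ↔
      (0 < ceKsup (ceSet a b) w φ ψ ∧ ceKsup (ceSet a b) w φ ψ < ⊤)) ∧
    (ceKsup (ceSet a b) w φ ψ < ⊤ →
      ∀ f : ℝ → ℂ, MemL2w (ceSet a b) w f →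
        l2wNorm (ceSet a b) w (ceA (ceSet a b) w φ ψ f)
            ≤ 2 * ceKsup (ceSet a b) w φ ψ * l2wNorm (ceSet a b) w f ∧
        l2wNorm (ceSet a b) w (ceB (ceSet a b) w φ ψ f)
            ≤ 2 * ceKsup (ceSet a b) w φ ψ * l2wNorm (ceSet a b) w f) := by
  obtain ⟨c, hc, hφc, -⟩ := hends
  set s := ceSet a b
  set ν := (wMeasure w).restrict s
  have hs := isOpen_ceSet a b
  have hconn := ordConnected_ceSet a b
  simp only [← enorm_eq_nnnorm] at hpos
  have hφ : AEStronglyMeasurable φ ν :=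
    aestronglyMeasurable_restrict_of_forall_Icc hs hconn fun α hα β hβ => (hloc α hα β hβ).1.1
  have hψ : AEStronglyMeasurable ψ ν :=
    aestronglyMeasurable_restrict_of_forall_Icc hs hconn fun α hα β hβ => (hloc α hα β hβ).2.1
  have hΦ0 : ∀ x ∈ s, sqIntegralIic ν φ x ≠ 0 := fun x hx =>
    sqIntegralIic_restrict_ne_zero hs hconn hx fun α hα hαx => (hpos α hα x hx hαx).1
  have hΨ0 : ∀ x ∈ s, sqIntegralIci ν ψ x ≠ 0 := fun x hx =>
    sqIntegralIci_restrict_ne_zero hs hconn hx fun β hβ hxβ => (hpos x hx β hβ hxβ).2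
  have hKpos : 0 < ceKsup s w φ ψ := by
    refine lt_of_lt_of_le ?_ (ceK_le_ceKsup hc)
    rw [ceK_eq]
    exact ENNReal.mul_pos ((ENNReal.rpow_eq_zero_iff_of_pos (by norm_num)).not.2 (hΦ0 c hc))
      ((ENNReal.rpow_eq_zero_iff_of_pos (by norm_num)).not.2 (hΨ0 c hc))
  have bounded := fun hK f (hf : MemL2w s w f) =>
    memL2w_ceA_and_ceB hs.measurableSet hφ hψ hΦ0 hΨ0 hK hf
  refine ⟨⟨fun ⟨_, M, hM, hB⟩ => ⟨hKpos, (iSup₂_le fun x hx => ?_).trans_lt hM⟩,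
    fun ⟨_, hK⟩ => ⟨⟨2 * ceKsup s w φ ψ, by finiteness, fun f hf => (bounded hK f hf).1⟩,
      ⟨2 * ceKsup s w φ ψ, by finiteness, fun f hf => (bounded hK f hf).2⟩⟩⟩,
    fun hK f hf => ⟨(bounded hK f hf).1.2, (bounded hK f hf).2.2⟩⟩
  rw [ceK_eq]
  exact rpow_half_mul_rpow_half_le_of_eLpNorm_le hφ (fun f hf => ceB_eq s w φ ψ f ▸ (hB f hf).2)
    (hΦ0 x hx) (sqIntegralIic_restrict_ne_top hφc (hloc c hc x hx).1)

/-- **The Chisholm–Everitt Theorem.** Let `(a,b)` be an open interval (bounded or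
unbounded), `w` measurable and positive a.e. on `(a,b)`, and `φ, ψ : (a,b) → ℂ`
satisfy: (i) `φ, ψ ∈ L²_loc((a,b); w)`; (ii) `φ ∈ L²((a,c]; w)` and
`ψ ∈ L²([c,b); w)` for some `c ∈ (a,b)`; (iii) neither `φ` nor `ψ` vanishes a.e.
on any compact subinterval `[α,β] ⊂ (a,b)`. Then the operators
`(Af)(x) = φ(x)∫_x^b ψ f w dt` and `(Bf)(x) = ψ(x)∫_a^x φ f w dt` are both bounded
on `L²((a,b); w)` if and only if `0 < K < ∞`, where `K = sup_x K(x)`; moreover in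
that case `‖Af‖ ≤ 2K‖f‖` and `‖Bg‖ ≤ 2K‖g‖` for all `f, g ∈ L²((a,b); w)`. -/
theorem chisholm_everitt (a b : EReal) (hab : a < b) (w : ℝ → ℝ) (φ ψ : ℝ → ℂ)
    (hw : Measurable w)
    (hwpos : ∀ᵐ x ∂(volume.restrict (ceSet a b)), 0 < w x)
    (hloc : ∀ α ∈ ceSet a b, ∀ β ∈ ceSet a b,
      MemLp φ 2 ((wMeasure w).restrict (Icc α β)) ∧
      MemLp ψ 2 ((wMeasure w).restrict (Icc α β)))
    (hends : ∃ c ∈ ceSet a b,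
      MemLp φ 2 ((wMeasure w).restrict (ceSet a b ∩ Iic c)) ∧
      MemLp ψ 2 ((wMeasure w).restrict (ceSet a b ∩ Ici c)))
    (hpos : ∀ α ∈ ceSet a b, ∀ β ∈ ceSet a b, α < β →
      (0 < ∫⁻ t in Icc α β, (‖φ t‖₊ : ℝ≥0∞) ^ 2 ∂(wMeasure w)) ∧
      (0 < ∫⁻ t in Icc α β, (‖ψ t‖₊ : ℝ≥0∞) ^ 2 ∂(wMeasure w))) :
    ((BoundedL2w (ceSet a b) w (ceA (ceSet a b) w φ ψ) ∧
        BoundedL2w (ceSet a b) w (ceB (ceSet a b) w φ ψ)) ↔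
      (0 < ceKsup (ceSet a b) w φ ψ ∧ ceKsup (ceSet a b) w φ ψ < ⊤)) ∧
    (ceKsup (ceSet a b) w φ ψ < ⊤ →
      ∀ f : ℝ → ℂ, MemL2w (ceSet a b) w f →
        l2wNorm (ceSet a b) w (ceA (ceSet a b) w φ ψ f)
            ≤ 2 * ceKsup (ceSet a b) w φ ψ * l2wNorm (ceSet a b) w f ∧
        l2wNorm (ceSet a b) w (ceB (ceSet a b) w φ ψ f)
            ≤ 2 * ceKsup (ceSet a b) w φ ψ * l2wNorm (ceSet a b) w f) :=
  chisholm_everitt_general a b w φ ψ hloc hends hpos
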